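/- Let X ∈ ℝ^{n×p} have full column rank, M = diag(m_1,…,m_n) with m_i > 0, and w_i(β) = exp(⟨x_i,β⟩)/(1+exp(⟨x_i,β⟩))^2. Define the penalized log-likelihood l*(β) = ∑_i [y_i⟨x_i,β⟩ − m_i log(1+exp(⟨x_i,β⟩))] + (1/2) log det(Xᵀ M W(β) X), where 0 ≤ y_i ≤ m_i are given reals. Then l* attains its supremum over ℝ^p, and the set of maximizers is bounded. -/

import Mathlib

/-!
The binomial terms `y z - m log (1 + e^z)` are nonpositive when `0 ≤ y ≤ m`, so it suffices that
the penalty `½ log det I(β)`, with `I(β) = Xᵀ M W(β) X`, tends to `-∞` as `‖β‖ → ∞`. For a positive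
semidefinite `A` one has `det A ≤ λ_min(A) tr(A)^(p-1)` and `λ_min(A) ‖β‖² ≤ βᵀ A β`. Here
`βᵀ I(β) β = ∑ mᵢ w(zᵢ) zᵢ²` with `zᵢ = ⟨xᵢ, β⟩`, and `w(z) z²` is bounded because
`w(z) ≤ e^{-|z|}`, while `tr I(β)` is bounded because `w ≤ 1`; hence `det I(β) = O(‖β‖⁻²)`.
A continuous function on `ℝᵖ` tending to `-∞` at infinity attains its maximum, and its maximizers
lie in a bounded superlevel set.
-/

namespace Matrix

variable {ι κ : Type*} [Fintype ι] [Fintype κ]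

lemma IsHermitian.eigenvalues_mul_dotProduct_self_le [DecidableEq κ] {A : Matrix κ κ ℝ}
    (hA : A.IsHermitian) {i : κ} (hi : ∀ j, hA.eigenvalues i ≤ hA.eigenvalues j) (v : κ → ℝ) :
    hA.eigenvalues i * (v ⬝ᵥ v) ≤ v ⬝ᵥ A *ᵥ v := by
  set U : Matrix κ κ ℝ := (hA.eigenvectorUnitary : Matrix κ κ ℝ)
  have hUU : U * star U = 1 := Unitary.mul_star_self_of_mem hA.eigenvectorUnitary.2
  have hspec : A = U * diagonal hA.eigenvalues * star U := hA.spectral_theorem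
  set c := star U *ᵥ v
  have hvU : v ᵥ* U = c := by
    rw [← mulVec_transpose]; rfl
  have hcc : c ⬝ᵥ c = v ⬝ᵥ v := by
    nth_rw 1 [← hvU]
    rw [← dotProduct_mulVec, mulVec_mulVec, hUU, one_mulVec]
  have hquad : v ⬝ᵥ A *ᵥ v = ∑ j, hA.eigenvalues j * (c j * c j) := by
    rw [congrArg (fun B => v ⬝ᵥ B *ᵥ v) hspec, ← mulVec_mulVec, ← mulVec_mulVec,
      dotProduct_mulVec, hvU, dotProduct]
    exact Finset.sum_congr rfl fun j _ => by rw [mulVec_diagonal]; ring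
  rw [hquad, ← hcc, dotProduct, Finset.mul_sum]
  exact Finset.sum_le_sum fun j _ => mul_le_mul_of_nonneg_right (hi j) (mul_self_nonneg _)

lemma PosSemidef.det_mul_dotProduct_self_le [DecidableEq κ] {A : Matrix κ κ ℝ}
    (hA : A.PosSemidef) (v : κ → ℝ) :
    A.det * (v ⬝ᵥ v) ≤ (v ⬝ᵥ A *ᵥ v) * A.trace ^ (Fintype.card κ - 1) := by
  rcases isEmpty_or_nonempty κ with hκ | hκ
  · simp [dotProduct]
  set μ := hA.1.eigenvalues
  obtain ⟨i, -, hi⟩ := Finset.exists_min_image Finset.univ μ Finset.univ_nonempty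
  have hμ : ∀ j, 0 ≤ μ j := hA.eigenvalues_nonneg
  have hμ_le_trace : ∀ j, μ j ≤ A.trace := by
    intro j
    rw [hA.1.trace_eq_sum_eigenvalues]
    simpa using Finset.single_le_sum (fun k _ => hμ k) (Finset.mem_univ j)
  have hdet : A.det ≤ μ i * A.trace ^ (Fintype.card κ - 1) := by
    rw [hA.1.det_eq_prod_eigenvalues, ← Finset.mul_prod_erase _ _ (Finset.mem_univ i)]
    refine mul_le_mul_of_nonneg_left ?_ (hμ i)
    calc ∏ j ∈ Finset.univ.erase i, (μ j : ℝ)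
        ≤ ∏ _j ∈ Finset.univ.erase i, A.trace :=
          Finset.prod_le_prod (fun j _ => hμ j) (fun j _ => hμ_le_trace j)
      _ = A.trace ^ (Fintype.card κ - 1) := by
          rw [Finset.prod_const, Finset.card_erase_of_mem (Finset.mem_univ i), Finset.card_univ]
  calc A.det * (v ⬝ᵥ v) ≤ μ i * A.trace ^ (Fintype.card κ - 1) * (v ⬝ᵥ v) :=
        mul_le_mul_of_nonneg_right hdet (Finset.sum_nonneg fun j _ => mul_self_nonneg (v j))
    _ = μ i * (v ⬝ᵥ v) * A.trace ^ (Fintype.card κ - 1) := by ring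
    _ ≤ (v ⬝ᵥ A *ᵥ v) * A.trace ^ (Fintype.card κ - 1) :=
        mul_le_mul_of_nonneg_right
          (hA.1.eigenvalues_mul_dotProduct_self_le (fun j => hi j (Finset.mem_univ j)) v)
          (pow_nonneg hA.trace_nonneg _)

lemma dotProduct_mulVec_transpose_mul_diagonal_mul [DecidableEq ι] (X : Matrix ι κ ℝ)
    (d : ι → ℝ) (v : κ → ℝ) :
    v ⬝ᵥ (Xᵀ * diagonal d * X) *ᵥ v = ∑ i, d i * (X *ᵥ v) i ^ 2 := by
  rw [← mulVec_mulVec, ← mulVec_mulVec, dotProduct_mulVec, vecMul_transpose, dotProduct]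
  exact Finset.sum_congr rfl fun i _ => by rw [mulVec_diagonal]; ring

lemma trace_transpose_mul_diagonal_mul [DecidableEq ι] (X : Matrix ι κ ℝ) (d : ι → ℝ) :
    (Xᵀ * diagonal d * X).trace = ∑ i, d i * ∑ j, X i j ^ 2 := by
  simp only [trace, diag_apply, mul_apply, transpose_apply, diagonal_apply, mul_ite, mul_zero,
    Finset.sum_ite_eq', Finset.mem_univ, if_true, Finset.mul_sum]
  rw [Finset.sum_comm]
  exact Finset.sum_congr rfl fun i _ => Finset.sum_congr rfl fun j _ => by ring

lemma det_transpose_mul_diagonal_mul_mul_le [DecidableEq ι] [DecidableEq κ] (X : Matrix ι κ ℝ)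
    {d : ι → ℝ} (hd : ∀ i, 0 ≤ d i) (v : κ → ℝ) :
    (Xᵀ * diagonal d * X).det * (v ⬝ᵥ v) ≤
      (∑ i, d i * (X *ᵥ v) i ^ 2) * (∑ i, d i * ∑ j, X i j ^ 2) ^ (Fintype.card κ - 1) := by
  have hpsd : (Xᵀ * diagonal d * X).PosSemidef := by
    simpa only [conjTranspose_eq_transpose_of_trivial] using
      (PosSemidef.diagonal hd).conjTranspose_mul_mul_same X
  rw [← dotProduct_mulVec_transpose_mul_diagonal_mul, ← trace_transpose_mul_diagonal_mul]
  exact hpsd.det_mul_dotProduct_self_le v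

end Matrix

open Real

/-- The Bernoulli variance `σ(z) (1 - σ(z))` of the logistic function `σ(z) = e^z / (1 + e^z)`. -/
noncomputable def logisticWeight (z : ℝ) : ℝ := exp z / (1 + exp z) ^ 2

lemma logisticWeight_pos (z : ℝ) : 0 < logisticWeight z := by
  unfold logisticWeight; positivity

lemma logisticWeight_le_one (z : ℝ) : logisticWeight z ≤ 1 :=
  div_le_one_of_le₀ (by nlinarith [exp_pos z]) (by positivity)

lemma logisticWeight_le_exp_neg_abs (z : ℝ) : logisticWeight z ≤ exp (-|z|) := by
  unfold logisticWeight
  rcases le_total 0 z with hz | hz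
  · calc exp z / (1 + exp z) ^ 2 ≤ exp z / exp z ^ 2 := by
          gcongr
          linarith
      _ = exp (-|z|) := by rw [abs_of_nonneg hz, exp_neg]; field_simp
  · rw [abs_of_nonpos hz, neg_neg]
    exact div_le_self (exp_pos z).le (one_le_pow₀ (by linarith [exp_pos z]))

lemma logisticWeight_mul_sq_le (z : ℝ) : logisticWeight z * z ^ 2 ≤ 2 := by
  have hexp : |z| ^ 2 / 2 ≤ exp |z| := by
    simpa using pow_div_factorial_le_exp _ (abs_nonneg z) 2
  calc logisticWeight z * z ^ 2 ≤ exp (-|z|) * |z| ^ 2 := by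
        rw [sq_abs]; gcongr; exact logisticWeight_le_exp_neg_abs z
    _ ≤ 2 := by
        rw [exp_neg, inv_mul_le_iff₀ (exp_pos _)]; linarith

lemma continuous_logisticWeight : Continuous logisticWeight :=
  continuous_exp.div (by fun_prop) fun z => by positivity

lemma mul_sub_mul_log_one_add_exp_nonpos {y m : ℝ} (hy : 0 ≤ y) (hym : y ≤ m) (z : ℝ) :
    y * z - m * log (1 + exp z) ≤ 0 := by
  have hlog : max z 0 ≤ log (1 + exp z) :=
    max_le (by simpa using log_le_log (exp_pos z) (by linarith [exp_pos z]))
      (log_nonneg (by linarith [exp_pos z]))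
  have : y * z ≤ m * log (1 + exp z) :=
    calc y * z ≤ y * max z 0 := mul_le_mul_of_nonneg_left (le_max_left _ _) hy
      _ ≤ m * max z 0 := mul_le_mul_of_nonneg_right hym (le_max_right _ _)
      _ ≤ m * log (1 + exp z) := mul_le_mul_of_nonneg_left hlog (hy.trans hym)
  linarith

open Filter Topology Bornology

lemma Continuous.exists_forall_ge_and_isBounded_setOf_forall_le {E : Type*}
    [PseudoMetricSpace E] [ProperSpace E] [Nonempty E] {f : E → ℝ} (hf : Continuous f)
    (h : Tendsto f (cobounded E) atBot) :
    (∃ b, ∀ x, f x ≤ f b) ∧ IsBounded {x | ∀ x', f x' ≤ f x} := by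
  refine ⟨hf.exists_forall_ge (by rwa [← Metric.cobounded_eq_cocompact]), ?_⟩
  obtain ⟨x₀⟩ := ‹Nonempty E›
  refine IsBounded.subset (isBounded_def.mpr ?_) fun x hx => hx x₀
  filter_upwards [h.eventually_lt_atBot (f x₀)] with x hx
  exact not_le.mpr hx

section LogisticRegression

variable {ι κ : Type*} [Fintype ι] [Fintype κ] [DecidableEq ι]
  (X : Matrix ι κ ℝ) (m y : ι → ℝ)

open Matrix

noncomputable def logisticFisherInfo (β : κ → ℝ) : Matrix κ κ ℝ :=
  Xᵀ * diagonal (fun i => m i * logisticWeight ((X *ᵥ β) i)) * X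

noncomputable def firthLogLik [DecidableEq κ] (β : κ → ℝ) : ℝ :=
  ∑ i, (y i * (X *ᵥ β) i - m i * log (1 + exp ((X *ᵥ β) i))) +
    1 / 2 * log (logisticFisherInfo X m β).det

variable {X m y}

lemma logisticFisherInfo_posDef (hX : Function.Injective X.mulVec) (hm : ∀ i, 0 < m i)
    (β : κ → ℝ) : (logisticFisherInfo X m β).PosDef := by
  unfold logisticFisherInfo
  simpa only [conjTranspose_eq_transpose_of_trivial] using
    (posDef_diagonal_iff.mpr fun i =>
      mul_pos (hm i) (logisticWeight_pos _)).conjTranspose_mul_mul_same hX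

lemma continuous_logisticFisherInfo : Continuous (logisticFisherInfo X m) := by
  unfold logisticFisherInfo
  have := continuous_logisticWeight
  fun_prop

lemma det_logisticFisherInfo_mul_le [DecidableEq κ] (hm : ∀ i, 0 ≤ m i) (β : κ → ℝ) :
    (logisticFisherInfo X m β).det * (β ⬝ᵥ β) ≤
      (2 * ∑ i, m i) * (∑ i, m i * ∑ j, X i j ^ 2) ^ (Fintype.card κ - 1) := by
  set w := fun i => logisticWeight ((X *ᵥ β) i)
  have hrow : ∀ i, 0 ≤ ∑ j, X i j ^ 2 := fun i => Finset.sum_nonneg fun j _ => sq_nonneg _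
  have hquad : ∑ i, m i * w i * (X *ᵥ β) i ^ 2 ≤ 2 * ∑ i, m i := by
    rw [Finset.mul_sum]
    refine Finset.sum_le_sum fun i _ => ?_
    nlinarith [mul_le_mul_of_nonneg_left (logisticWeight_mul_sq_le ((X *ᵥ β) i)) (hm i)]
  have htrace : ∑ i, m i * w i * ∑ j, X i j ^ 2 ≤ ∑ i, m i * ∑ j, X i j ^ 2 :=
    Finset.sum_le_sum fun i _ => mul_le_mul_of_nonneg_right
      (mul_le_of_le_one_right (hm i) (logisticWeight_le_one _)) (hrow i)
  have hw : ∀ i, 0 ≤ m i * w i := fun i => mul_nonneg (hm i) (logisticWeight_pos _).le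
  have htrace_nonneg : 0 ≤ ∑ i, m i * w i * ∑ j, X i j ^ 2 :=
    Finset.sum_nonneg fun i _ => mul_nonneg (hw i) (hrow i)
  exact (det_transpose_mul_diagonal_mul_mul_le X hw β).trans
    (mul_le_mul hquad (pow_le_pow_left₀ htrace_nonneg htrace _) (pow_nonneg htrace_nonneg _)
      (mul_nonneg zero_le_two (Finset.sum_nonneg fun i _ => hm i)))

lemma tendsto_det_logisticFisherInfo_cobounded [DecidableEq κ]
    (hX : Function.Injective X.mulVec) (hm : ∀ i, 0 < m i) :
    Tendsto (fun β : EuclideanSpace ℝ κ => (logisticFisherInfo X m β.ofLp).det)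
      (cobounded _) (𝓝[>] 0) := by
  set C := (2 * ∑ i, m i) * (∑ i, m i * ∑ j, X i j ^ 2) ^ (Fintype.card κ - 1)
  have hdet_pos : ∀ β : κ → ℝ, 0 < (logisticFisherInfo X m β).det :=
    fun β => (logisticFisherInfo_posDef hX hm β).det_pos
  have hbound : ∀ β : EuclideanSpace ℝ κ, β ≠ 0 →
      (logisticFisherInfo X m β.ofLp).det ≤ C / ‖β‖ ^ 2 := by
    intro β hβ
    have hnorm : β.ofLp ⬝ᵥ β.ofLp = ‖β‖ ^ 2 := by
      rw [← real_inner_self_eq_norm_sq, EuclideanSpace.inner_eq_star_dotProduct]; rfl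
    rw [le_div_iff₀ (by positivity), ← hnorm]
    exact det_logisticFisherInfo_mul_le (fun i => (hm i).le) _
  have hC : Tendsto (fun β : EuclideanSpace ℝ κ => C / ‖β‖ ^ 2) (cobounded _) (𝓝 0) :=
    tendsto_const_nhds.div_atTop
      ((tendsto_pow_atTop two_ne_zero).comp tendsto_norm_cobounded_atTop)
  refine tendsto_nhdsWithin_iff.mpr
    ⟨tendsto_of_tendsto_of_tendsto_of_le_of_le' tendsto_const_nhds hC
      (Eventually.of_forall fun β => (hdet_pos _).le) ?_, Eventually.of_forall fun β => hdet_pos _⟩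
  filter_upwards [tendsto_norm_cobounded_atTop.eventually_gt_atTop 0] with β hβ
  exact hbound β (norm_pos_iff.mp hβ)

lemma continuous_firthLogLik [DecidableEq κ] (hX : Function.Injective X.mulVec)
    (hm : ∀ i, 0 < m i) : Continuous (firthLogLik X m y) := by
  have hdet : Continuous fun β => (logisticFisherInfo X m β).det :=
    continuous_logisticFisherInfo.matrix_det
  have hlin : Continuous fun β : κ → ℝ => X *ᵥ β := by fun_prop
  unfold firthLogLik
  refine continuous_finsetSum _ (fun i _ => ?_) |>.add
    (continuous_const.mul (hdet.log fun β => (logisticFisherInfo_posDef hX hm β).det_pos.ne'))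
  have hzi : Continuous fun β : κ → ℝ => (X *ᵥ β) i := (continuous_apply i).comp hlin
  exact (continuous_const.mul hzi).sub (continuous_const.mul
    ((continuous_const.add (continuous_exp.comp hzi)).log
      fun β => (add_pos one_pos (exp_pos _)).ne'))

lemma tendsto_firthLogLik_cobounded [DecidableEq κ] (hX : Function.Injective X.mulVec)
    (hm : ∀ i, 0 < m i) (hy : ∀ i, 0 ≤ y i ∧ y i ≤ m i) :
    Tendsto (fun β : EuclideanSpace ℝ κ => firthLogLik X m y β.ofLp) (cobounded _) atBot := by
  refine tendsto_atBot_mono (fun β => ?_) (Tendsto.const_mul_atBot one_half_pos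
    (tendsto_log_nhdsGT_zero.comp (tendsto_det_logisticFisherInfo_cobounded hX hm)))
  have := Finset.sum_nonpos fun i (_ : i ∈ Finset.univ) =>
    mul_sub_mul_log_one_add_exp_nonpos (hy i).1 (hy i).2 ((X *ᵥ β.ofLp) i)
  simp only [firthLogLik, Function.comp_apply]
  linarith

end LogisticRegression

theorem stmt_6 (n p : ℕ) (X : Matrix (Fin n) (Fin p) ℝ)
    (hX : LinearIndependent ℝ (fun j : Fin p => (fun i => X i j : Fin n → ℝ)))
    (m y : Fin n → ℝ) (hm : ∀ i, 0 < m i) (hy : ∀ i, 0 ≤ y i ∧ y i ≤ m i)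
    (w : ℝ → ℝ) (hw : ∀ z, w z = Real.exp z / (1 + Real.exp z) ^ 2)
    (W : EuclideanSpace ℝ (Fin p) → Matrix (Fin n) (Fin n) ℝ)
    (hW : ∀ β, W β = Matrix.diagonal (fun i => w (∑ j, X i j * β j)))
    (lstar : EuclideanSpace ℝ (Fin p) → ℝ)
    (hl : ∀ β, lstar β =
      (∑ i, (y i * (∑ j, X i j * β j) - m i * Real.log (1 + Real.exp (∑ j, X i j * β j)))) +
        (1 / 2) * Real.log (X.transpose * Matrix.diagonal m * W β * X).det) :
    (∃ b : EuclideanSpace ℝ (Fin p), ∀ β, lstar β ≤ lstar b) ∧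
      Bornology.IsBounded {β : EuclideanSpace ℝ (Fin p) | ∀ β', lstar β' ≤ lstar β} := by
  have hX' : Function.Injective X.mulVec := Matrix.mulVec_injective_iff.mpr hX
  obtain rfl : w = logisticWeight := funext hw
  have hlstar : lstar = fun β => firthLogLik X m y β.ofLp := by
    funext β
    rw [hl, hW, Matrix.mul_assoc X.transpose, Matrix.diagonal_mul_diagonal]
    rfl
  rw [hlstar]
  exact ((continuous_firthLogLik hX' hm).comp (PiLp.continuous_ofLp 2 _)
    ).exists_forall_ge_and_isBounded_setOf_forall_le (tendsto_firthLogLik_cobounded hX' hm hy)
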